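/- arXiv:1403.7602 — 2 statements merged into one kernel-verified Lean document; each statement's English description precedes it below -/
import Mathlib

section
/- If G is a finite group such that every Cayley graph Cay(G,S) with |S| ≤ k is integral, N is a normal subgroup of G with |N| dividing k, then every Cayley graph over G/N with connection set of size at most k/|N| is integral. -/
/-- The Cayley graph of a group `G` with connection set `S`. For a symmetric set `S`
with `1 ∉ S`, `g` and `h` are adjacent iff `h * g⁻¹ ∈ S`. -/
def cayley {G : Type*} [Group G] (S : Set G) : SimpleGraph G :=
  SimpleGraph.fromRel (fun g h => h * g⁻¹ ∈ S)

/-- A finite graph is integral if all eigenvalues of its adjacency matrix are integers. -/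
def IsIntegralGraph {V : Type*} [Finite V] (Γ : SimpleGraph V) : Prop :=
  letI := Fintype.ofFinite V
  letI := Classical.decEq V
  letI : DecidableRel Γ.Adj := Classical.decRel _
  ∀ μ ∈ spectrum ℝ (Γ.adjMatrix ℝ), ∃ z : ℤ, (z : ℝ) = μ

/-- `μ` is an eigenvalue of the adjacency matrix of the finite graph `Γ`. -/
def IsAdjEigenvalue {V : Type*} [Finite V] (Γ : SimpleGraph V) (μ : ℝ) : Prop :=
  letI := Fintype.ofFinite V
  letI := Classical.decEq V
  letI : DecidableRel Γ.Adj := Classical.decRel _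
  μ ∈ spectrum ℝ (Γ.adjMatrix ℝ)

/-! Pulling a connection set `S ⊆ G/N` back along `π : G → G/N` gives `T = π⁻¹ S` with
`|T| = |N| |S| ≤ k`, and `Cay(G, T)` is `Cay(G/N, S)` with every vertex blown up to a coset
of `N`. Lifting an eigenvector `v` of `Cay(G/N, S)` for `μ` to `v ∘ π` gives an eigenvector of
`Cay(G, T)` for `|N| μ`, so `|N| μ ∈ ℤ`. Being an eigenvalue of an integer matrix, `μ` is an
algebraic integer, and a rational algebraic integer is an integer. -/

open Matrix Polynomial

theorem Matrix.mem_spectrum_iff_exists_mulVec_eq_smul {K n : Type*} [Field K] [Fintype n]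
    [DecidableEq n] {A : Matrix n n K} {μ : K} :
    μ ∈ spectrum K A ↔ ∃ v ≠ 0, A *ᵥ v = μ • v := by
  rw [← spectrum_toLin', ← Module.End.hasEigenvalue_iff_mem_spectrum,
    Module.End.hasEigenvalue_iff, Submodule.ne_bot_iff]
  simp only [Module.End.mem_eigenspace_iff, toLin'_apply]
  exact exists_congr fun v => and_comm

theorem Matrix.isIntegral_of_mem_spectrum_map {R K n : Type*} [CommRing R] [Field K]
    [Algebra R K] [Fintype n] [DecidableEq n] {B : Matrix n n R} {μ : K}
    (hμ : μ ∈ spectrum K (B.map (algebraMap R K))) : IsIntegral R μ :=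
  ⟨B.charpoly, B.charpoly_monic, by
    rw [← eval_map, ← charpoly_map]
    exact mem_spectrum_iff_isRoot_charpoly.mp hμ⟩

theorem exists_int_eq_of_isIntegral_of_natCast_mul_eq {K : Type*} [Field K] [CharZero K]
    {μ : K} (hμ : IsIntegral ℤ μ) {n : ℕ} (hn : n ≠ 0) {z : ℤ} (h : n * μ = z) :
    ∃ m : ℤ, (m : K) = μ := by
  have hq : algebraMap ℚ K (z / n) = μ := by
    rw [map_div₀, map_intCast, map_natCast, ← h]
    field_simp
  rw [← hq, isIntegral_algebraMap_iff (algebraMap ℚ K).injective] at hμ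
  obtain ⟨m, hm⟩ := IsIntegrallyClosed.isIntegral_iff.mp hμ
  exact ⟨m, by rw [← hq, ← hm]; simp⟩

namespace SimpleGraph

theorem adjMatrix_int_map {V R : Type*} [Fintype V] [DecidableEq V] [Ring R]
    (Γ : SimpleGraph V) [DecidableRel Γ.Adj] :
    (Γ.adjMatrix ℤ).map (algebraMap ℤ R) = Γ.adjMatrix R := by
  ext i j
  by_cases h : Γ.Adj i j <;> simp [h]

variable {V W : Type*} {Γ : SimpleGraph W} [DecidableRel Γ.Adj] {f : V → W}
  [DecidableRel (Γ.comap f).Adj]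

theorem adjMatrix_comap_apply {R : Type*} [Zero R] [One R] (x y : V) :
    (Γ.comap f).adjMatrix R x y = Γ.adjMatrix R (f x) (f y) := by
  by_cases h : Γ.Adj (f x) (f y) <;> simp [h]

variable [Fintype V] [Fintype W] [DecidableEq W] {n : ℕ}

theorem adjMatrix_comap_mulVec_comp {R : Type*} [Semiring R]
    (hf : ∀ w, Nat.card (f ⁻¹' {w}) = n) (v : W → R) :
    (Γ.comap f).adjMatrix R *ᵥ (v ∘ f) = n • ((Γ.adjMatrix R *ᵥ v) ∘ f) := by
  ext x
  have hfib : ∀ w, Fintype.card {y // f y = w} = n := fun w => by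
    rw [← Nat.card_eq_fintype_card]; exact hf w
  simp only [mulVec, dotProduct, adjMatrix_comap_apply, Function.comp_apply, Pi.smul_apply]
  rw [← Fintype.sum_fiberwise' f (fun w => Γ.adjMatrix R (f x) w * v w), Finset.smul_sum]
  simp [hfib]

theorem natCast_mul_mem_spectrum_adjMatrix_comap {K : Type*} [Field K] [DecidableEq V]
    (hf : ∀ w, Nat.card (f ⁻¹' {w}) = n) (hn : n ≠ 0) {μ : K}
    (hμ : μ ∈ spectrum K (Γ.adjMatrix K)) :
    (n * μ) ∈ spectrum K ((Γ.comap f).adjMatrix K) := by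
  obtain ⟨v, hv0, hv⟩ := mem_spectrum_iff_exists_mulVec_eq_smul.mp hμ
  have hsurj : f.Surjective := fun w => by
    obtain ⟨⟨x, hx⟩⟩ := (Nat.card_ne_zero.mp (hf w ▸ hn)).1
    exact ⟨x, hx⟩
  refine mem_spectrum_iff_exists_mulVec_eq_smul.mpr ⟨v ∘ f, ?_, ?_⟩
  · exact fun h => hv0 (hsurj.injective_comp_right h)
  · rw [adjMatrix_comap_mulVec_comp hf, hv]
    ext x
    simp [mul_assoc]

end SimpleGraph

theorem IsIntegralGraph.of_comap {V W : Type*} [Finite V] [Finite W] {Γ : SimpleGraph W}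
    {f : V → W} {n : ℕ} (hf : ∀ w, Nat.card (f ⁻¹' {w}) = n) (hn : n ≠ 0)
    (h : IsIntegralGraph (Γ.comap f)) : IsIntegralGraph Γ := by
  let := Fintype.ofFinite V
  let := Fintype.ofFinite W
  let := Classical.decEq V
  let := Classical.decEq W
  let : DecidableRel Γ.Adj := Classical.decRel _
  let : DecidableRel (Γ.comap f).Adj := Classical.decRel _
  intro μ hμ
  obtain ⟨z, hz⟩ := h _ (SimpleGraph.natCast_mul_mem_spectrum_adjMatrix_comap hf hn hμ)
  refine exists_int_eq_of_isIntegral_of_natCast_mul_eq ?_ hn hz.symm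
  rw [← Γ.adjMatrix_int_map] at hμ
  exact isIntegral_of_mem_spectrum_map hμ

theorem cayley_preimage {G H : Type*} [Group G] [Group H] (f : G →* H) {S : Set H}
    (hS : (1 : H) ∉ S) : cayley (f ⁻¹' S) = (cayley S).comap f := by
  ext g h
  simp only [cayley, SimpleGraph.fromRel_adj, SimpleGraph.comap_adj, Set.mem_preimage,
    map_mul, map_inv]
  refine ⟨fun ⟨_, hgh⟩ => ⟨fun he => ?_, hgh⟩,
    fun ⟨hne, hgh⟩ => ⟨fun he => hne (he ▸ rfl), hgh⟩⟩
  rcases hgh with hgh | hgh <;> simp [he] at hgh <;> exact hS hgh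

theorem quotient_by_small_normal_general (G : Type*) [Group G] [Finite G] (k : ℕ)
    (hG : ∀ S : Finset G, (1 : G) ∉ S → (∀ s ∈ S, s⁻¹ ∈ S) → S.card ≤ k →
      IsIntegralGraph (cayley (S : Set G)))
    (N : Subgroup G) [N.Normal] :
    ∀ S : Finset (G ⧸ N), (1 : G ⧸ N) ∉ S → (∀ s ∈ S, s⁻¹ ∈ S) →
      S.card ≤ k / Nat.card N →
      IsIntegralGraph (cayley (S : Set (G ⧸ N))) := by
  intro S hS1 hSsym hScard
  have := Fintype.ofFinite G
  classical
  let T : Finset G := {g | (g : G ⧸ N) ∈ S}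
  have hT : (T : Set G) = QuotientGroup.mk' N ⁻¹' S := by ext; simp [T]
  have hTcard : T.card ≤ k := calc
    T.card = Nat.card N * S.card := by
      rw [← Nat.card_eq_finsetCard, ← Finset.coe_sort_coe, hT, QuotientGroup.coe_mk',
        QuotientGroup.card_preimage_mk, Finset.coe_sort_coe, Nat.card_eq_finsetCard]
    _ ≤ Nat.card N * (k / Nat.card N) := by gcongr
    _ ≤ k := Nat.mul_div_le k _
  have hTint := hG T (by simpa [T] using hS1)
    (fun s hs => by simpa [T] using hSsym _ (by simpa [T] using hs)) hTcard
  rw [hT, cayley_preimage _ hS1] at hTint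
  refine hTint.of_comap (n := Nat.card N) (fun c => ?_) Nat.card_pos.ne'
  rw [QuotientGroup.coe_mk', QuotientGroup.card_preimage_mk,
    Nat.card_unique (α := ({c} : Set _)), mul_one]

theorem quotient_by_small_normal (G : Type*) [Group G] [Finite G] (k : ℕ)
    (hG : ∀ S : Finset G, (1 : G) ∉ S → (∀ s ∈ S, s⁻¹ ∈ S) → S.card ≤ k →
      IsIntegralGraph (cayley (S : Set G)))
    (N : Subgroup G) [N.Normal] (hdvd : Nat.card N ∣ k) :
    ∀ S : Finset (G ⧸ N), (1 : G ⧸ N) ∉ S → (∀ s ∈ S, s⁻¹ ∈ S) →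
      S.card ≤ k / Nat.card N →
      IsIntegralGraph (cayley (S : Set (G ⧸ N))) :=
  quotient_by_small_normal_general G k hG N
end

section
/- The Cayley graph of the group H₁₆ = ⟨a, b, c | a⁴ = b² = c² = 1, [a,b] = c, [c,a] = [c,b] = 1⟩ of order 16 with connection set {ba, ba⁻¹c, b} has √5 as an eigenvalue; in particular, H₁₆ admits a non-integral Cayley graph with connection set of size 3. -/
/-!
`G` has a two-dimensional real representation `ρ` with `ρ a` the rotation by `π / 2`,
`ρ b = diag(1, -1)` and `ρ c = -1`: it exists because every element of `G` has a unique normal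
form `b ^ j * a ^ i * c ^ k`, and the matrices satisfy the same relations. The connection set is
sent to `ρ (b * a) + ρ (b * a⁻¹ * c) + ρ b = !![1, -2; -2, -1]`, of trace `0` and determinant
`-5`, hence with eigenvalue `√5`. If `w` is an eigenvector for it, the matrix coefficient
`g ↦ (ρ g⁻¹ *ᵥ w) i` is an eigenvector of the Cayley graph for the same eigenvalue.
-/

open scoped Pointwise Matrix commutatorElement

section NormalWord

variable {M : Type*} [Monoid M]

def normalWord (x y z : M) (i j k : ℕ) : M := x ^ i * y ^ j * z ^ k

/-- In a group this says `⁅y, x⁆ = z` with `z` commuting with `x` and `y`. -/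
structure IsHeisenbergTriple (x y z : M) : Prop where
  mul_eq : y * x = x * y * z
  commute_fst : Commute x z
  commute_snd : Commute y z

variable {x y z : M}

lemma normalWord_one_zero_zero : normalWord x y z 1 0 0 = x := by
  simp [normalWord]

lemma normalWord_zero_one_zero : normalWord x y z 0 1 0 = y := by
  simp [normalWord]

lemma normalWord_mod {m n l : ℕ} (hx : x ^ m = 1) (hy : y ^ n = 1) (hz : z ^ l = 1) (i j k : ℕ) :
    normalWord x y z i j k = normalWord x y z (i % m) (j % n) (k % l) := by
  rw [normalWord, pow_eq_pow_mod i hx, pow_eq_pow_mod j hy, pow_eq_pow_mod k hz, normalWord]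

namespace IsHeisenbergTriple

lemma mul_pow_eq (h : IsHeisenbergTriple x y z) (p : ℕ) : y * x ^ p = x ^ p * y * z ^ p := by
  induction p with
  | zero => simp
  | succ p ih =>
    calc y * x ^ (p + 1) = x ^ p * y * (z ^ p * x) := by rw [pow_succ, ← mul_assoc, ih, mul_assoc]
      _ = x ^ p * (y * x) * z ^ p := by
        rw [(h.commute_fst.pow_right p).symm.eq]; simp only [mul_assoc]
      _ = x ^ (p + 1) * y * z ^ (p + 1) := by
        rw [h.mul_eq, pow_succ, pow_succ']; simp only [mul_assoc]

lemma pow_mul_pow_eq (h : IsHeisenbergTriple x y z) (j p : ℕ) :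
    y ^ j * x ^ p = x ^ p * y ^ j * z ^ (j * p) := by
  induction j with
  | zero => simp
  | succ j ih =>
    calc y ^ (j + 1) * x ^ p = y ^ j * x ^ p * y * z ^ p := by
          rw [pow_succ, mul_assoc, h.mul_pow_eq]; simp only [mul_assoc]
      _ = x ^ p * y ^ j * (z ^ (j * p) * y) * z ^ p := by rw [ih]; simp only [mul_assoc]
      _ = x ^ p * y ^ (j + 1) * z ^ ((j + 1) * p) := by
        rw [(h.commute_snd.pow_right _).symm.eq, add_mul, one_mul, pow_add z, pow_succ y j]
        simp only [mul_assoc]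

lemma normalWord_mul (h : IsHeisenbergTriple x y z) (i j k p q r : ℕ) :
    normalWord x y z i j k * normalWord x y z p q r =
      normalWord x y z (i + p) (j + q) (j * p + k + r) := by
  have hyx (w : M) : y ^ j * (x ^ p * w) = x ^ p * (y ^ j * (z ^ (j * p) * w)) := by
    rw [← mul_assoc, h.pow_mul_pow_eq]; simp only [mul_assoc]
  simp only [normalWord, pow_add, mul_assoc, hyx, (h.commute_fst.pow_pow p k).symm.left_comm,
    (h.commute_snd.pow_pow q k).symm.left_comm, (h.commute_snd.pow_pow q (j * p)).symm.left_comm]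

end IsHeisenbergTriple

end NormalWord

section Group

variable {G : Type*} [Group G] {a b c : G}

lemma IsHeisenbergTriple.of_commutatorElement (h : ⁅b, a⁆ = c) (hac : Commute a c)
    (hbc : Commute b c) : IsHeisenbergTriple a b c := by
  refine ⟨?_, hac, hbc⟩
  calc b * a = c * (a * b) := by rw [← h, commutatorElement_def]; group
    _ = a * b * c := (hac.mul_left hbc).eq.symm

namespace IsHeisenbergTriple

lemma exists_normalWord_eq [Finite G] (h : IsHeisenbergTriple a b c)
    (hgen : Subgroup.closure {a, b} = ⊤) (g : G) : ∃ i j k, normalWord a b c i j k = g := by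
  have hg : g ∈ Submonoid.closure {a, b} := by
    rw [← Subgroup.closure_toSubmonoid_of_finite, hgen]; trivial
  induction hg using Submonoid.closure_induction_left with
  | one => exact ⟨0, 0, 0, by simp [normalWord]⟩
  | mul_left x hx g _ ih =>
    obtain ⟨i, j, k, rfl⟩ := ih
    rcases hx with rfl | rfl
    · exact ⟨1 + i, 0 + j, 0 * i + 0 + k, by rw [← h.normalWord_mul, normalWord_one_zero_zero]⟩
    · exact ⟨0 + i, 1 + j, 1 * i + 0 + k, by rw [← h.normalWord_mul, normalWord_zero_one_zero]⟩

lemma bijective_normalWord [Finite G] (h : IsHeisenbergTriple a b c)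
    (hgen : Subgroup.closure {a, b} = ⊤) {m n l : ℕ} (ha : a ^ m = 1) (hb : b ^ n = 1)
    (hc : c ^ l = 1) (hcard : Nat.card G = m * n * l) :
    Function.Bijective fun t : Fin m × Fin n × Fin l => normalWord a b c t.1 t.2.1 t.2.2 := by
  obtain ⟨hm, hn, hl⟩ : 0 < m ∧ 0 < n ∧ 0 < l := by
    have hpos : 0 < m * n * l := hcard ▸ Nat.card_pos
    simpa [Nat.pos_iff_ne_zero, and_assoc] using hpos
  refine Function.Surjective.bijective_of_nat_card_le (fun g => ?_) (by simp [hcard, mul_assoc])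
  obtain ⟨i, j, k, rfl⟩ := h.exists_normalWord_eq hgen g
  exact ⟨(⟨i % m, Nat.mod_lt _ hm⟩, ⟨j % n, Nat.mod_lt _ hn⟩, ⟨k % l, Nat.mod_lt _ hl⟩),
    (normalWord_mod ha hb hc i j k).symm⟩

lemma exists_monoidHom {m n l : ℕ} (h : IsHeisenbergTriple a b c) (ha : a ^ m = 1)
    (hb : b ^ n = 1) (hc : c ^ l = 1)
    (he : Function.Bijective fun t : Fin m × Fin n × Fin l => normalWord a b c t.1 t.2.1 t.2.2)
    {M : Type*} [Monoid M] {x y z : M} (hxyz : IsHeisenbergTriple x y z) (hx : x ^ m = 1)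
    (hy : y ^ n = 1) (hz : z ^ l = 1) : ∃ ρ : G →* M, ρ a = x ∧ ρ b = y ∧ ρ c = z := by
  let e := Equiv.ofBijective _ he
  obtain ⟨⟨i₀, j₀, k₀⟩, -⟩ := he.2 1
  let φ (g : G) : M := normalWord x y z (e.symm g).1 (e.symm g).2.1 (e.symm g).2.2
  have hφ (i j k : ℕ) : φ (normalWord a b c i j k) = normalWord x y z i j k := by
    have hmod : normalWord a b c i j k =
        e (⟨i % m, Nat.mod_lt _ i₀.pos⟩, ⟨j % n, Nat.mod_lt _ j₀.pos⟩,
          ⟨k % l, Nat.mod_lt _ k₀.pos⟩) :=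
      normalWord_mod ha hb hc i j k
    simp only [φ, hmod, e.symm_apply_apply]
    exact (normalWord_mod hx hy hz i j k).symm
  have hsurj (g : G) : ∃ i j k : ℕ, normalWord a b c i j k = g :=
    let ⟨t, ht⟩ := he.2 g
    ⟨t.1, t.2.1, t.2.2, ht⟩
  refine ⟨{ toFun := φ, map_one' := ?_, map_mul' := fun g g' => ?_ }, ?_, ?_, ?_⟩
  · simpa [normalWord] using hφ 0 0 0
  · obtain ⟨i, j, k, rfl⟩ := hsurj g
    obtain ⟨p, q, r, rfl⟩ := hsurj g'
    simp only [h.normalWord_mul, hφ, hxyz.normalWord_mul]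
  · simpa [normalWord] using hφ 1 0 0
  · simpa [normalWord] using hφ 0 1 0
  · simpa [normalWord] using hφ 0 0 1

end IsHeisenbergTriple

end Group

section Cayley

variable {G : Type*} [Group G]

lemma cayley_adj_iff {S : Set G} (hS : S⁻¹ = S) (h1 : 1 ∉ S) {g h : G} :
    (cayley S).Adj g h ↔ h * g⁻¹ ∈ S := by
  rw [cayley, SimpleGraph.fromRel_adj, ← Set.inv_mem_inv, hS, mul_inv_rev, inv_inv, or_self,
    and_iff_right_iff_imp]
  rintro hmem rfl
  exact h1 (by simpa using hmem)

lemma cayley_adjMatrix_mulVec_apply [Fintype G] [DecidableEq G] {S : Finset G}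
    (hS : (S : Set G)⁻¹ = S) (h1 : 1 ∉ S) [DecidableRel (cayley (S : Set G)).Adj]
    {R : Type*} [NonAssocSemiring R] (v : G → R) (g : G) :
    ((cayley (S : Set G)).adjMatrix R *ᵥ v) g = ∑ s ∈ S, v (s * g) := by
  have hadj {h : G} : (cayley (S : Set G)).Adj g h ↔ h * g⁻¹ ∈ S :=
    cayley_adj_iff hS (by simpa using h1)
  rw [SimpleGraph.adjMatrix_mulVec_apply]
  refine Finset.sum_nbij' (· * g⁻¹) (· * g) ?_ ?_ ?_ ?_ ?_
  · intro h hh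
    simpa [hadj] using hh
  · intro s hs
    simpa [hadj] using hs
  all_goals intros; simp

lemma Matrix.mem_spectrum_of_mulVec_eq_smul {n K : Type*} [Fintype n] [DecidableEq n] [Field K]
    {A : Matrix n n K} {v : n → K} {μ : K} (hv : v ≠ 0) (h : A *ᵥ v = μ • v) :
    μ ∈ spectrum K A := by
  rw [← Matrix.spectrum_toLin', ← Module.End.hasEigenvalue_iff_mem_spectrum]
  exact Module.End.hasEigenvalue_of_hasEigenvector ⟨Module.End.mem_eigenspace_iff.mpr h, hv⟩

lemma isAdjEigenvalue_cayley_of_mulVec_eq_smul [Finite G] {ι : Type*} [Fintype ι] [DecidableEq ι]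
    (ρ : G →* Matrix ι ι ℝ) {S : Finset G} (hS : (S : Set G)⁻¹ = S) (h1 : 1 ∉ S)
    {w : ι → ℝ} (hw : w ≠ 0) {μ : ℝ} (h : (∑ s ∈ S, ρ s) *ᵥ w = μ • w) :
    IsAdjEigenvalue (cayley (S : Set G)) μ := by
  classical
  let := Fintype.ofFinite G
  obtain ⟨i, hi⟩ := Function.ne_iff.mp hw
  let v : G → ℝ := fun g => (ρ g⁻¹ *ᵥ w) i
  have hsum : ∑ s ∈ S, ρ s⁻¹ = ∑ s ∈ S, ρ s := by
    have hinv {s : G} (hs : s ∈ S) : s⁻¹ ∈ S := by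
      rw [← Finset.mem_coe, ← Set.mem_inv, hS]; exact hs
    exact Finset.sum_nbij' (·⁻¹) (·⁻¹) (fun _ => hinv) (fun _ => hinv) (by simp) (by simp)
      (fun _ _ => rfl)
  refine Matrix.mem_spectrum_of_mulVec_eq_smul (v := v) (fun hv => hi ?_) (funext fun g => ?_)
  · simpa [v] using congrFun hv 1
  · calc ((cayley (S : Set G)).adjMatrix ℝ *ᵥ v) g = ∑ s ∈ S, v (s * g) :=
          cayley_adjMatrix_mulVec_apply hS h1 v g
      _ = (ρ g⁻¹ *ᵥ (∑ s ∈ S, ρ s⁻¹) *ᵥ w) i := by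
          simp only [v, mul_inv_rev, map_mul, Matrix.sum_mulVec, Matrix.mulVec_sum,
            Matrix.mulVec_mulVec, Finset.sum_apply]
      _ = (μ • v) g := by
          rw [hsum, h, Matrix.mulVec_smul]; rfl

lemma not_isIntegralGraph_of_isAdjEigenvalue {V : Type*} [Finite V] {Γ : SimpleGraph V} {μ : ℝ}
    (hμ : IsAdjEigenvalue Γ μ) (hirr : Irrational μ) : ¬ IsIntegralGraph Γ := fun hΓ =>
  let ⟨z, hz⟩ := hΓ μ hμ
  hirr ⟨z, by simpa using hz⟩

end Cayley

lemma isHeisenbergTriple_fin_two :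
    IsHeisenbergTriple (!![1, 0; 0, -1] : Matrix (Fin 2) (Fin 2) ℝ) !![0, -1; 1, 0] (-1) :=
  ⟨by simp, Commute.neg_one_right _, Commute.neg_one_right _⟩

lemma mulVec_fin_two_eq_sqrt_five_smul :
    (!![1, -2; -2, -1] : Matrix (Fin 2) (Fin 2) ℝ) *ᵥ ![2, 1 - √5] = √5 • ![2, 1 - √5] := by
  have h5 : √5 * √5 = 5 := Real.mul_self_sqrt (by norm_num)
  ext i
  fin_cases i <;> simp [Matrix.mulVec, dotProduct, Fin.sum_univ_two] <;> linarith

lemma cayley_isAdjEigenvalue_sqrt_five {G : Type*} [Group G] [Finite G] {a b c : G}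
    (ρ : G →* Matrix (Fin 2) (Fin 2) ℝ) (hρa : ρ a = !![0, -1; 1, 0]) (hρb : ρ b = !![1, 0; 0, -1])
    (hρc : ρ c = -1) (ha : a ^ 4 = 1) (hb : b ^ 2 = 1) (hab : ⁅a, b⁆ = c) (hac : a ≠ a⁻¹ * c) :
    IsAdjEigenvalue (cayley ({b * a, b * a⁻¹ * c, b} : Set G)) (Real.sqrt 5) := by
  classical
  have ha' : a⁻¹ = a ^ 3 := inv_eq_of_mul_eq_one_right (by rw [← pow_succ', ha])
  have hb' : b⁻¹ = b := inv_eq_of_mul_eq_one_right (by rw [← sq, hb])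
  have hinv : (b * a)⁻¹ = b * a⁻¹ * c := by
    rw [← hab, commutatorElement_def, mul_inv_rev, hb']
    simp only [mul_assoc, inv_mul_cancel_left]
    rw [← mul_assoc b b, ← sq, hb, one_mul]
  have hρ₁ : ρ (b * a) = !![0, -1; -1, 0] := by simp [hρa, hρb]
  have hρ₂ : ρ (b * a⁻¹ * c) = !![0, -1; -1, 0] := by simp [ha', hρa, hρb, hρc, pow_succ]
  let S : Finset G := {b * a, b * a⁻¹ * c, b}
  have hsymm : (S : Set G)⁻¹ = S := by
    have hinv' : (b * a⁻¹ * c)⁻¹ = b * a := by rw [← hinv, inv_inv]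
    simp only [S, Finset.coe_insert, Finset.coe_singleton, Set.inv_insert, Set.inv_singleton, hinv,
      hinv', hb']
    exact Set.insert_comm _ _ _
  have h1 : 1 ∉ S := by
    simp only [S, Finset.mem_insert, Finset.mem_singleton, not_or]
    refine ⟨ne_of_apply_ne ρ ?_, ne_of_apply_ne ρ ?_, ne_of_apply_ne ρ ?_⟩ <;>
      rw [map_one, Matrix.one_fin_two] <;> norm_num [hρ₁, hρ₂, hρb]
  have hsum : ∑ s ∈ S, ρ s = !![1, -2; -2, -1] := by
    have hba : b * a ≠ b * a⁻¹ * c := by rwa [mul_assoc, Ne, mul_right_inj]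
    have hne_b {g : G} (hg : ρ g = !![0, -1; -1, 0]) : g ≠ b :=
      ne_of_apply_ne ρ (by rw [hg, hρb]; norm_num)
    rw [Finset.sum_insert (by simpa only [Finset.mem_insert, Finset.mem_singleton, not_or]
        using ⟨hba, hne_b hρ₁⟩), Finset.sum_insert (Finset.notMem_singleton.mpr (hne_b hρ₂)),
      Finset.sum_singleton, hρ₁, hρ₂, hρb]
    norm_num
  have hμ := isAdjEigenvalue_cayley_of_mulVec_eq_smul ρ hsymm h1 (by simp)
    (hsum ▸ mulVec_fin_two_eq_sqrt_five_smul)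
  simpa [S] using hμ

theorem H16_cayley_not_integral (G : Type*) [Group G] [Finite G]
    (hcard : Nat.card G = 16)
    (a b c : G) (ha : a ^ 4 = 1) (hb : b ^ 2 = 1) (hc : c ^ 2 = 1)
    (hab : ⁅a, b⁆ = c) (hca : ⁅c, a⁆ = 1) (hcb : ⁅c, b⁆ = 1)
    (hgen : Subgroup.closure {a, b} = ⊤) :
    IsAdjEigenvalue (cayley ({b * a, b * a⁻¹ * c, b} : Set G)) (Real.sqrt 5) ∧
      ¬ IsIntegralGraph (cayley ({b * a, b * a⁻¹ * c, b} : Set G)) := by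
  have hG : IsHeisenbergTriple b a c := .of_commutatorElement hab
    (commutatorElement_eq_one_iff_commute.mp hcb).symm
    (commutatorElement_eq_one_iff_commute.mp hca).symm
  have he := hG.bijective_normalWord (Set.pair_comm a b ▸ hgen) hb ha hc hcard
  obtain ⟨ρ, hρb, hρa, hρc⟩ := hG.exists_monoidHom hb ha hc he isHeisenbergTriple_fin_two
    (by simp [sq, Matrix.one_fin_two]) (by simp [pow_succ, Matrix.one_fin_two]) (by simp)
  -- `ρ (a ^ 2) = -1 = ρ c`, so this needs the normal form.
  have hac : a ≠ a⁻¹ * c := by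
    rw [inv_eq_of_mul_eq_one_right (by rw [← pow_succ', ha] : a * a ^ 3 = 1)]
    simpa [normalWord] using he.injective.ne (a₁ := (0, 1, 0)) (a₂ := (0, 3, 1)) (by decide)
  have hμ := cayley_isAdjEigenvalue_sqrt_five ρ hρa hρb hρc ha hb hab hac
  exact ⟨hμ, not_isIntegralGraph_of_isAdjEigenvalue hμ (by norm_num)⟩
end
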